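/- arXiv:2408.09364 — 2 statements merged into one kernel-verified Lean document; each statement's English description precedes it below -/
import Mathlib

section
/- For every real α > 0 and every h ∈ C₀([0,∞)), the function G⁰_α h is continuous on (0,∞), G⁰_α h(x) → 0 as x → 0⁺, G⁰_α h(x) → 0 as x → ∞, and lim_{x→0⁺} G⁰_α h(x)/x = 2·∫₀^∞ e^{−√(2α)y}·h(y) dy. -/
open MeasureTheory Real Filter Topology

/-- The resolvent density of killed Brownian motion on `(0,∞)`. -/
noncomputable def g0 (α x y : ℝ) : ℝ :=
  (2 / Real.sqrt (2 * α)) * Real.sinh (Real.sqrt (2 * α) * min x y) *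
    Real.exp (-(Real.sqrt (2 * α) * max x y))

/-- The resolvent `G⁰_α h` of killed Brownian motion on `(0,∞)`. -/
noncomputable def G0 (α : ℝ) (h : ℝ → ℝ) (x : ℝ) : ℝ :=
  ∫ y in Set.Ioi (0 : ℝ), g0 α x y * h y

/-- `h ∈ C₀([0,∞))`: continuous on `[0,∞)` and vanishing at infinity. -/
def MemC0 (h : ℝ → ℝ) : Prop :=
  ContinuousOn h (Set.Ici 0) ∧ Filter.Tendsto h Filter.atTop (nhds 0)

/-!
Write `c = √(2α)`. For `|x| ≤ r` and `y ≥ 0` the kernel obeys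
`|g⁰_α(x,y)| ≤ (2/c) sinh(c r) e^{-cy}`, so for bounded `h` the integrand of `G⁰_α h(x)` is
dominated locally uniformly in `x`. Dominated convergence then makes `G⁰_α h` continuous on all
of `ℝ`, with `G⁰_α h(0) = 0`, and gives the slope at `0` from `g⁰_α(x,y)/x → 2 e^{-cy}`.
At infinity, `|g⁰_α(x,y)| ≤ e^{-c|x-y|}/c` for `x, y ≥ 0`; after the substitution `y = x - t`
the integrand is dominated by `M e^{-c|t|}/c`, where `|h| ≤ M`, and tends to `0` pointwise
because `h` does.
-/

open Set

lemma exists_norm_le_of_continuousOn_Ici_of_tendsto {E : Type*} [NormedAddCommGroup E]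
    {f : ℝ → E} {a : ℝ} {l : E} (hf : ContinuousOn f (Ici a)) (hlim : Tendsto f atTop (𝓝 l)) :
    ∃ C, ∀ x ∈ Ici a, ‖f x‖ ≤ C := by
  obtain ⟨A, hA⟩ := eventually_atTop.1 (hlim.norm.eventually_le_const (lt_add_one ‖l‖))
  obtain ⟨B, hB⟩ := isCompact_Icc.exists_bound_of_continuousOn (hf.mono Icc_subset_Ici_self)
  refine ⟨max B (‖l‖ + 1), fun x hx => ?_⟩
  rcases le_total x A with hxA | hAx
  · exact (hB x ⟨hx, hxA⟩).trans (le_max_left _ _)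
  · exact (hA x hAx).trans (le_max_right _ _)

lemma integrable_exp_neg_mul_abs {c : ℝ} (hc : 0 < c) :
    Integrable fun t : ℝ => exp (-(c * |t|)) := by
  rw [← integrableOn_univ, ← Iic_union_Ioi (a := (0 : ℝ)), integrableOn_union]
  constructor
  · refine (integrableOn_exp_mul_Iic hc 0).congr_fun (fun t ht => ?_) measurableSet_Iic
    rw [abs_of_nonpos ht, mul_neg, neg_neg]
  · refine (exp_neg_integrableOn_Ioi 0 hc).congr_fun (fun t ht => ?_) measurableSet_Ioi
    simp only [abs_of_pos (mem_Ioi.1 ht), neg_mul]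

lemma sinh_le_exp_div_two (t : ℝ) : sinh t ≤ exp t / 2 := by
  rw [sinh_eq]
  linarith [exp_pos (-t)]

lemma tendsto_sinh_mul_div_nhdsGT_zero (c : ℝ) :
    Tendsto (fun x => sinh (c * x) / x) (𝓝[>] 0) (𝓝 c) := by
  have hderiv : HasDerivAt (fun x => sinh (c * x)) c 0 := by
    simpa using ((hasDerivAt_id (0 : ℝ)).const_mul c).sinh
  simpa [div_eq_inv_mul] using hderiv.tendsto_slope_zero_right

section Kernel

variable {α : ℝ}

lemma g0_comm (x y : ℝ) : g0 α x y = g0 α y x := by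
  rw [g0, g0, min_comm, max_comm]

lemma g0_of_le {x y : ℝ} (hxy : x ≤ y) :
    g0 α x y = 2 / √(2 * α) * sinh (√(2 * α) * x) * exp (-(√(2 * α) * y)) := by
  rw [g0, min_eq_left hxy, max_eq_right hxy]

lemma continuous_g0_left (y : ℝ) : Continuous fun x => g0 α x y := by
  unfold g0
  fun_prop

lemma continuous_g0_right (x : ℝ) : Continuous (g0 α x) := by
  unfold g0
  fun_prop

lemma abs_g0_le_of_abs_le {x y r : ℝ} (hx : |x| ≤ r) (hy : 0 ≤ y) :
    |g0 α x y| ≤ 2 / √(2 * α) * sinh (√(2 * α) * r) * exp (-(√(2 * α) * y)) := by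
  have hc : 0 ≤ √(2 * α) := sqrt_nonneg _
  have hmin : |min x y| ≤ r := abs_le.2
    ⟨le_min (abs_le.1 hx).1 (by linarith [abs_nonneg x]), (min_le_left x y).trans (le_of_abs_le hx)⟩
  rw [g0, abs_mul, abs_mul, abs_of_nonneg (by positivity : (0 : ℝ) ≤ 2 / √(2 * α)),
    abs_of_pos (exp_pos _), abs_sinh, abs_mul, abs_of_nonneg hc]
  gcongr
  · exact mul_nonneg (by positivity) (sinh_nonneg_iff.2 (mul_nonneg hc ((abs_nonneg x).trans hx)))
  · exact sinh_le_sinh.2 (by gcongr)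
  · exact le_max_right x y

lemma abs_g0_le_exp_neg_abs_sub {x y : ℝ} (hx : 0 ≤ x) (hy : 0 ≤ y) :
    |g0 α x y| ≤ exp (-(√(2 * α) * |x - y|)) / √(2 * α) := by
  wlog hxy : x ≤ y generalizing x y
  · rw [g0_comm, abs_sub_comm]
    exact this hy hx (le_of_not_ge hxy)
  have hc : 0 ≤ √(2 * α) := sqrt_nonneg _
  rw [g0_of_le hxy, abs_of_nonneg (by have := sinh_nonneg_iff.2 (mul_nonneg hc hx); positivity),
    abs_of_nonpos (sub_nonpos.2 hxy)]
  calc 2 / √(2 * α) * sinh (√(2 * α) * x) * exp (-(√(2 * α) * y))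
      ≤ 2 / √(2 * α) * (exp (√(2 * α) * x) / 2) * exp (-(√(2 * α) * y)) := by
        gcongr
        exact sinh_le_exp_div_two _
    _ = exp (-(√(2 * α) * -(x - y))) / √(2 * α) := by
        rw [show -(√(2 * α) * -(x - y)) = √(2 * α) * x + -(√(2 * α) * y) by ring, exp_add]
        ring

end Kernel

section Resolvent

variable {α : ℝ} {h : ℝ → ℝ} {M : ℝ}

lemma G0_apply_zero : G0 α h 0 = 0 :=
  setIntegral_eq_zero_of_forall_eq_zero fun y hy => by simp [g0_of_le (le_of_lt hy)]

lemma continuous_G0 (hα : 0 < α) (hmeas : AEStronglyMeasurable h (volume.restrict (Ioi 0)))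
    (hM : ∀ y ∈ Ioi (0 : ℝ), |h y| ≤ M) : Continuous (G0 α h) := by
  rw [continuous_iff_continuousAt]
  intro x₀
  set c := √(2 * α)
  have hc : 0 < c := sqrt_pos.2 (by linarith)
  have hM0 : 0 ≤ M := (abs_nonneg _).trans (hM 1 (mem_Ioi.2 one_pos))
  have hnear : ∀ᶠ x in 𝓝 x₀, |x| ≤ |x₀| + 1 :=
    (continuous_abs.continuousAt.eventually_lt continuousAt_const (lt_add_one |x₀|)).mono
      fun _ => le_of_lt
  refine continuousAt_of_dominated
    (bound := fun y => 2 / c * sinh (c * (|x₀| + 1)) * exp (-(c * y)) * M)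
    (Eventually.of_forall fun x => (continuous_g0_right x).aestronglyMeasurable.mul hmeas) ?_ ?_
    (Eventually.of_forall fun y => ((continuous_g0_left y).mul continuous_const).continuousAt)
  · filter_upwards [hnear] with x hx
    filter_upwards [ae_restrict_mem measurableSet_Ioi] with y hy
    rw [norm_mul, norm_eq_abs, norm_eq_abs]
    exact mul_le_mul (abs_g0_le_of_abs_le hx (le_of_lt hy)) (hM y hy) (abs_nonneg _)
      (by have := sinh_nonneg_iff.2 (by positivity : 0 ≤ c * (|x₀| + 1)); positivity)
  · simpa only [neg_mul] using
      ((exp_neg_integrableOn_Ioi 0 hc).const_mul (2 / c * sinh (c * (|x₀| + 1)))).mul_const M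

lemma G0_eq_integral_sub (x : ℝ) :
    G0 α h x = ∫ t, g0 α x (x - t) * (Ioi 0).indicator h (x - t) := by
  rw [integral_sub_left_eq_self (fun y => g0 α x y * (Ioi 0).indicator h y) volume x, G0,
    ← integral_indicator measurableSet_Ioi]
  simp_rw [indicator_mul_right]

lemma tendsto_G0_atTop (hα : 0 < α) (hmeas : AEStronglyMeasurable h (volume.restrict (Ioi 0)))
    (hM : ∀ y ∈ Ioi (0 : ℝ), |h y| ≤ M) (hlim : Tendsto h atTop (𝓝 0)) :
    Tendsto (G0 α h) atTop (𝓝 0) := by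
  simp_rw [funext G0_eq_integral_sub]
  set c := √(2 * α)
  have hc : 0 < c := sqrt_pos.2 (by linarith)
  have hM0 : 0 ≤ M := (abs_nonneg _).trans (hM 1 (mem_Ioi.2 one_pos))
  set u := (Ioi (0 : ℝ)).indicator h
  have hu_le (y : ℝ) : |u y| ≤ M := by
    by_cases hy : y ∈ Ioi 0
    · simpa [u, indicator_of_mem hy] using hM y hy
    · simpa [u, indicator_of_notMem hy] using hM0
  have hu_lim : Tendsto u atTop (𝓝 0) :=
    hlim.congr' ((eventually_gt_atTop 0).mono fun y hy => (indicator_of_mem hy h).symm)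
  have hkernel {x : ℝ} (hx : 0 ≤ x) (t : ℝ) :
      |g0 α x (x - t) * u (x - t)| ≤ exp (-(c * |t|)) / c * |u (x - t)| := by
    rw [abs_mul]
    by_cases ht : x - t ∈ Ioi 0
    · gcongr
      simpa only [sub_sub_cancel] using abs_g0_le_exp_neg_abs_sub hx (le_of_lt ht)
    · simp [u, indicator_of_notMem ht]
  have hmeas_u : AEStronglyMeasurable u volume :=
    (aestronglyMeasurable_indicator_iff measurableSet_Ioi).2 hmeas
  have hF_meas : ∀ᶠ x in atTop, AEStronglyMeasurable (fun t => g0 α x (x - t) * u (x - t)) :=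
    Eventually.of_forall fun x =>
      ((continuous_g0_right x).comp (continuous_sub_left x)).aestronglyMeasurable.mul
        (hmeas_u.comp_measurePreserving (Measure.measurePreserving_sub_left volume x))
  have hF_le : ∀ᶠ x in atTop, ∀ᵐ t, ‖g0 α x (x - t) * u (x - t)‖ ≤ exp (-(c * |t|)) / c * M :=
    (eventually_ge_atTop 0).mono fun x hx => Eventually.of_forall fun t =>
      (hkernel hx t).trans (by gcongr; exact hu_le _)
  have hF_lim : ∀ᵐ t, Tendsto (fun x => g0 α x (x - t) * u (x - t)) atTop (𝓝 0) :=
    Eventually.of_forall fun t => squeeze_zero_norm'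
      ((eventually_ge_atTop 0).mono fun x hx => hkernel hx t)
      (by simpa [sub_eq_add_neg] using
        ((hu_lim.comp (tendsto_atTop_add_const_right atTop (-t) tendsto_id)).abs.const_mul
          (exp (-(c * |t|)) / c)))
  simpa using tendsto_integral_filter_of_dominated_convergence (f := fun _ => 0) _ hF_meas hF_le
    (((integrable_exp_neg_mul_abs hc).div_const c).mul_const M) hF_lim

lemma tendsto_G0_div_nhdsGT_zero (hα : 0 < α)
    (hmeas : AEStronglyMeasurable h (volume.restrict (Ioi 0)))
    (hM : ∀ y ∈ Ioi (0 : ℝ), |h y| ≤ M) :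
    Tendsto (fun x => G0 α h x / x) (𝓝[>] 0)
      (𝓝 (2 * ∫ y in Ioi (0 : ℝ), exp (-(√(2 * α) * y)) * h y)) := by
  set c := √(2 * α) with hc_def
  have hc : 0 < c := sqrt_pos.2 (by linarith)
  have hM0 : 0 ≤ M := (abs_nonneg _).trans (hM 1 (mem_Ioi.2 one_pos))
  have hslope := tendsto_sinh_mul_div_nhdsGT_zero c
  simp_rw [G0, ← integral_div, ← integral_const_mul]
  refine tendsto_integral_filter_of_dominated_convergence
    (fun y => 2 / c * (c + 1) * exp (-(c * y)) * M)
    (Eventually.of_forall fun x => by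
      simpa only [div_eq_mul_inv, Pi.mul_apply] using
        ((continuous_g0_right (α := α) x).aestronglyMeasurable.mul hmeas).mul_const x⁻¹) ?_ ?_ ?_
  · filter_upwards [hslope.eventually_le_const (lt_add_one c), self_mem_nhdsWithin]
      with x hx hx_mem
    filter_upwards [ae_restrict_mem measurableSet_Ioi] with y hy
    have hx0 : (0 : ℝ) < x := hx_mem
    have hg : |g0 α x y| / x ≤ 2 / c * (sinh (c * x) / x) * exp (-(c * y)) := by
      rw [div_le_iff₀ hx0]
      calc |g0 α x y| ≤ 2 / c * sinh (c * x) * exp (-(c * y)) :=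
            abs_g0_le_of_abs_le (abs_of_pos hx0).le (le_of_lt hy)
        _ = 2 / c * (sinh (c * x) / x) * exp (-(c * y)) * x := by field_simp
    rw [norm_eq_abs, abs_div, abs_mul, abs_of_pos hx0, mul_div_right_comm]
    calc |g0 α x y| / x * |h y| ≤ 2 / c * (sinh (c * x) / x) * exp (-(c * y)) * M :=
          mul_le_mul hg (hM y hy) (abs_nonneg _) ((div_nonneg (abs_nonneg _) hx0.le).trans hg)
      _ ≤ 2 / c * (c + 1) * exp (-(c * y)) * M := by gcongr
  · simpa only [neg_mul] using
      ((exp_neg_integrableOn_Ioi 0 hc).const_mul (2 / c * (c + 1))).mul_const M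
  · filter_upwards [ae_restrict_mem measurableSet_Ioi] with y hy
    have hlim : Tendsto (fun x => 2 / c * (sinh (c * x) / x) * exp (-(c * y)) * h y) (𝓝[>] 0)
        (𝓝 (2 * (exp (-(c * y)) * h y))) := by
      convert ((hslope.const_mul (2 / c)).mul_const (exp (-(c * y)))).mul_const (h y) using 2
      field_simp
    refine hlim.congr' ?_
    filter_upwards [Ioo_mem_nhdsGT hy] with x hx
    rw [g0_of_le hx.2.le, ← hc_def]
    field_simp

end Resolvent

/-- For `α > 0` and `h ∈ C₀([0,∞))`: `G⁰_α h` is continuous on `(0,∞)`,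
`G⁰_α h(x) → 0` as `x → 0⁺`, `G⁰_α h(x) → 0` as `x → ∞`, and
`G⁰_α h(x)/x → 2·∫₀^∞ e^{−√(2α)y} h(y) dy` as `x → 0⁺`. -/
theorem stmt2 (α : ℝ) (hα : 0 < α) (h : ℝ → ℝ) (hh : MemC0 h) :
    ContinuousOn (G0 α h) (Set.Ioi 0) ∧
    Filter.Tendsto (G0 α h) (nhdsWithin 0 (Set.Ioi 0)) (nhds 0) ∧
    Filter.Tendsto (G0 α h) Filter.atTop (nhds 0) ∧
    Filter.Tendsto (fun x => G0 α h x / x) (nhdsWithin 0 (Set.Ioi 0))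
      (nhds (2 * ∫ y in Set.Ioi (0 : ℝ), Real.exp (-(Real.sqrt (2 * α) * y)) * h y)) := by
  obtain ⟨hcont, hlim⟩ := hh
  have hmeas : AEStronglyMeasurable h (volume.restrict (Ioi 0)) :=
    (hcont.mono Ioi_subset_Ici_self).aestronglyMeasurable measurableSet_Ioi
  obtain ⟨M, hM⟩ := exists_norm_le_of_continuousOn_Ici_of_tendsto hcont hlim
  have hM' : ∀ y ∈ Ioi (0 : ℝ), |h y| ≤ M := fun y hy => hM y (mem_Ici.2 (le_of_lt hy))
  have hG := continuous_G0 hα hmeas hM'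
  refine ⟨hG.continuousOn, ?_, tendsto_G0_atTop hα hmeas hM' hlim,
    tendsto_G0_div_nhdsGT_zero hα hmeas hM'⟩
  simpa only [G0_apply_zero] using (hG.tendsto 0).mono_left nhdsWithin_le_nhds
end

section
/- Let (p₁,p₂,p₃,p₄) be an admissible quadruple, α > 0, h ∈ C₀([0,∞)), c ∈ ℝ, and define f(0) := c and f(x) := G⁰_α h(x) + c·e^{−√(2α)x} for x > 0. Then x ↦ f(0) − f(x) is p₄-integrable on (0,∞), and the boundary identity p₁·f(0) − p₂·lim_{x→0⁺} f'(x) + (p₃/2)·lim_{x→0⁺} f''(x) + ∫_{(0,∞)} (f(0) − f(x)) p₄(dx) = 0 holds if and only if c·(p₁ + √(2α)·p₂ + α·p₃ + ∫_{(0,∞)}(1 − e^{−√(2α)x}) p₄(dx)) = 2p₂·∫₀^∞ e^{−√(2α)x}·h(x) dx + p₃·h(0) + ∫_{(0,∞)} G⁰_α h(x) p₄(dx). -/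
open MeasureTheory Real Filter Topology

/-- An admissible quadruple `(p₁,p₂,p₃,p₄)`: `p₁,p₂,p₃ ≥ 0`, `p₄` a positive Borel
measure carried by `(0,∞)` with `∫ min(1,x) p₄(dx) < ∞`, normalized by
`p₁+p₂+p₃+∫ min(x,1) p₄(dx) = 1`, and `|p₄| = ∞` whenever `p₂ = p₃ = 0`. -/
def IsAdmissible (p₁ p₂ p₃ : ℝ) (p₄ : Measure ℝ) : Prop :=
  0 ≤ p₁ ∧ 0 ≤ p₂ ∧ 0 ≤ p₃ ∧ p₄ (Set.Iic 0) = 0 ∧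
  (∫⁻ x in Set.Ioi (0 : ℝ), ENNReal.ofReal (min 1 x) ∂p₄) < ⊤ ∧
  p₁ + p₂ + p₃ + (∫ x in Set.Ioi (0 : ℝ), min x 1 ∂p₄) = 1 ∧
  (p₂ = 0 ∧ p₃ = 0 → p₄ (Set.Ioi 0) = ⊤)

/-!
With `β = √(2α)`, splitting the resolvent integral at `y = x` gives, for `x > 0`,
`G⁰_α h(x) = (2/β) (sinh(βx) ∫_x^∞ e^{-βy} h(y) dy + e^{-βx} ∫_0^x sinh(βy) h(y) dy)`.
This closed form is twice differentiable on `(0,∞)` by the fundamental theorem of calculus, and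
letting `x → 0⁺` in its derivatives gives `f'(0⁺) = 2 ∫_0^∞ e^{-βy} h(y) dy - βc` and
`f''(0⁺) = 2αc - 2h(0)`. Bounding `h` by `M`, the same formula gives
`|G⁰_α h(x)| ≤ (2M/β²)(1 - e^{-βx}) ≤ C min(1, x)`, so `f(0) - f` is `p₄`-integrable, and the
boundary identity is then a linear equation in `c`.
-/

open Set

noncomputable section

variable {β M : ℝ} {h : ℝ → ℝ}

theorem MemC0.exists_abs_le (hh : MemC0 h) : ∃ M, ∀ y ∈ Ici (0 : ℝ), |h y| ≤ M := by
  obtain ⟨N, hN⟩ := (hh.2.eventually (Metric.ball_mem_nhds 0 one_pos)).exists_forall_of_atTop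
  obtain ⟨C, hC⟩ := (isCompact_Icc (a := 0) (b := max N 0)).exists_bound_of_continuousOn
    (hh.1.mono fun y hy => hy.1)
  refine ⟨max C 1, fun y hy => ?_⟩
  rcases le_or_gt y (max N 0) with hyN | hyN
  · exact (hC y ⟨hy, hyN⟩).trans (le_max_left _ _)
  · have := hN y ((le_max_left _ _).trans hyN.le)
    rw [Real.dist_eq, sub_zero] at this
    exact this.le.trans (le_max_right _ _)

theorem hasDerivAt_integral_zero_of_continuousOn_Ici {g : ℝ → ℝ} (hg : ContinuousOn g (Ici 0))
    {x : ℝ} (hx : 0 < x) : HasDerivAt (fun u => ∫ t in (0 : ℝ)..u, g t) (g x) x :=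
  intervalIntegral.integral_hasDerivAt_right
    ((hg.mono Icc_subset_Ici_self).intervalIntegrable_of_Icc hx.le)
    ((hg.mono Ioi_subset_Ici_self).stronglyMeasurableAtFilter isOpen_Ioi x hx)
    (hg.continuousAt (Ici_mem_nhds hx))

theorem tendsto_integral_zero_of_continuousOn_Ici {g : ℝ → ℝ} (hg : ContinuousOn g (Ici 0)) :
    Tendsto (fun u => ∫ t in (0 : ℝ)..u, g t) (𝓝[>] 0) (𝓝 0) := by
  have hcont := intervalIntegral.continuousOn_primitive_interval (a := 0) (b := 1) (μ := volume)
    ((hg.mono (by simp [Icc_subset_Ici_self])).integrableOn_compact isCompact_uIcc)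
  have := (hcont 0 (by simp)).mono_of_mem_nhdsWithin (by simpa using Icc_mem_nhdsGT one_pos)
  simpa using this.tendsto

theorem integral_exp_neg_mul_Ioi (hβ : 0 < β) (x : ℝ) :
    ∫ y in Ioi x, exp (-(β * y)) = exp (-(β * x)) / β := by
  simp_rw [← neg_mul]
  rw [integral_exp_mul_Ioi (neg_lt_zero.2 hβ), div_neg, neg_div, neg_neg]

theorem integral_sinh_mul_Ioc (hβ : 0 < β) {x : ℝ} (hx : 0 ≤ x) :
    ∫ y in Ioc 0 x, sinh (β * y) = (cosh (β * x) - 1) / β := by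
  have hderiv (y : ℝ) : HasDerivAt (fun y => cosh (β * y) / β) (sinh (β * y)) y := by
    have := (((hasDerivAt_id y).const_mul β).cosh).div_const β
    simpa [mul_div_cancel_left₀ _ hβ.ne', mul_comm] using this
  rw [← intervalIntegral.integral_of_le hx, intervalIntegral.integral_eq_sub_of_hasDerivAt
    (fun y _ => hderiv y) ((by fun_prop : Continuous fun y => sinh (β * y)).intervalIntegrable 0 x)]
  simp [sub_div]

theorem integrableOn_exp_neg_mul_mul_Ioi (hβ : 0 < β) (hcont : ContinuousOn h (Ici 0))
    (hM : ∀ y ∈ Ici (0 : ℝ), |h y| ≤ M) {a : ℝ} (ha : 0 ≤ a) :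
    IntegrableOn (fun y => exp (-(β * y)) * h y) (Ioi a) := by
  have hsub : Ioi a ⊆ Ici 0 := fun y hy => ha.trans hy.out.le
  have hexp : IntegrableOn (fun y => exp (-(β * y))) (Ioi a) := by
    simpa only [neg_mul] using exp_neg_integrableOn_Ioi a hβ
  refine hexp.mul_bdd (c := M)
    ((hcont.mono hsub).aestronglyMeasurable measurableSet_Ioi) ?_
  filter_upwards [ae_restrict_mem measurableSet_Ioi] with y hy using hM y (hsub hy)

theorem integrableOn_sinh_mul_mul_Ioc (hcont : ContinuousOn h (Ici 0)) (x : ℝ) :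
    IntegrableOn (fun y => sinh (β * y) * h y) (Ioc 0 x) :=
  ((by fun_prop : Continuous fun y => sinh (β * y)).continuousOn.mul
    (hcont.mono Icc_subset_Ici_self)).integrableOn_Icc.mono_set Ioc_subset_Icc_self

def expTail (β : ℝ) (h : ℝ → ℝ) (x : ℝ) : ℝ :=
  ∫ y in Ioi x, exp (-(β * y)) * h y

def sinhHead (β : ℝ) (h : ℝ → ℝ) (x : ℝ) : ℝ :=
  ∫ y in Ioc 0 x, sinh (β * y) * h y

theorem expTail_eq_sub (hβ : 0 < β) (hcont : ContinuousOn h (Ici 0))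
    (hM : ∀ y ∈ Ici (0 : ℝ), |h y| ≤ M) {x : ℝ} (hx : 0 ≤ x) :
    expTail β h x = expTail β h 0 - ∫ y in (0 : ℝ)..x, exp (-(β * y)) * h y := by
  rw [expTail, expTail, ← Ioc_union_Ioi_eq_Ioi hx, setIntegral_union Ioc_disjoint_Ioi_same
    measurableSet_Ioi ((integrableOn_exp_neg_mul_mul_Ioi hβ hcont hM le_rfl).mono_set
    Ioc_subset_Ioi_self) (integrableOn_exp_neg_mul_mul_Ioi hβ hcont hM hx),
    intervalIntegral.integral_of_le hx]
  ring

theorem sinhHead_eq_intervalIntegral {x : ℝ} (hx : 0 ≤ x) :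
    sinhHead β h x = ∫ y in (0 : ℝ)..x, sinh (β * y) * h y :=
  (intervalIntegral.integral_of_le hx).symm

theorem hasDerivAt_expTail (hβ : 0 < β) (hcont : ContinuousOn h (Ici 0))
    (hM : ∀ y ∈ Ici (0 : ℝ), |h y| ≤ M) {x : ℝ} (hx : 0 < x) :
    HasDerivAt (expTail β h) (-(exp (-(β * x)) * h x)) x := by
  refine ((hasDerivAt_integral_zero_of_continuousOn_Ici
    (g := fun y => exp (-(β * y)) * h y) (by fun_prop) hx).const_sub
    (expTail β h 0)).congr_of_eventuallyEq ?_
  filter_upwards [Ioi_mem_nhds hx] with u hu using expTail_eq_sub hβ hcont hM hu.out.le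

theorem hasDerivAt_sinhHead (hcont : ContinuousOn h (Ici 0)) {x : ℝ} (hx : 0 < x) :
    HasDerivAt (sinhHead β h) (sinh (β * x) * h x) x := by
  refine (hasDerivAt_integral_zero_of_continuousOn_Ici
    (g := fun y => sinh (β * y) * h y) (by fun_prop) hx).congr_of_eventuallyEq ?_
  filter_upwards [Ioi_mem_nhds hx] with u hu using sinhHead_eq_intervalIntegral hu.out.le

theorem tendsto_expTail (hβ : 0 < β) (hcont : ContinuousOn h (Ici 0))
    (hM : ∀ y ∈ Ici (0 : ℝ), |h y| ≤ M) :
    Tendsto (expTail β h) (𝓝[>] 0) (𝓝 (expTail β h 0)) := by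
  have := (tendsto_integral_zero_of_continuousOn_Ici
    (g := fun y => exp (-(β * y)) * h y) (by fun_prop)).const_sub (expTail β h 0)
  rw [sub_zero] at this
  refine this.congr' ?_
  filter_upwards [self_mem_nhdsWithin] with u hu using (expTail_eq_sub hβ hcont hM hu.out.le).symm

theorem tendsto_sinhHead (hcont : ContinuousOn h (Ici 0)) :
    Tendsto (sinhHead β h) (𝓝[>] 0) (𝓝 0) := by
  refine (tendsto_integral_zero_of_continuousOn_Ici
    (g := fun y => sinh (β * y) * h y) (by fun_prop)).congr' ?_
  filter_upwards [self_mem_nhdsWithin] with u hu using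
    (sinhHead_eq_intervalIntegral hu.out.le).symm

theorem abs_expTail_le (hβ : 0 < β) (hM : ∀ y ∈ Ici (0 : ℝ), |h y| ≤ M) {x : ℝ} (hx : 0 ≤ x) :
    |expTail β h x| ≤ M * exp (-(β * x)) / β := by
  have hbound : IntegrableOn (fun y => M * exp (-(β * y))) (Ioi x) := by
    simpa only [neg_mul, IntegrableOn] using (exp_neg_integrableOn_Ioi x hβ).const_mul M
  rw [← Real.norm_eq_abs, expTail]
  refine (norm_integral_le_of_norm_le hbound ?_).trans_eq ?_
  · filter_upwards [ae_restrict_mem measurableSet_Ioi] with y hy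
    rw [norm_mul, Real.norm_eq_abs, Real.norm_eq_abs, abs_exp, mul_comm M]
    exact mul_le_mul_of_nonneg_left (hM y (hx.trans hy.out.le)) (exp_pos _).le
  · rw [integral_const_mul, integral_exp_neg_mul_Ioi hβ, mul_div_assoc]

theorem abs_sinhHead_le (hβ : 0 < β) (hM : ∀ y ∈ Ici (0 : ℝ), |h y| ≤ M) {x : ℝ} (hx : 0 ≤ x) :
    |sinhHead β h x| ≤ M * (cosh (β * x) - 1) / β := by
  have hbound : IntegrableOn (fun y => M * sinh (β * y)) (Ioc 0 x) :=
    ((by fun_prop : Continuous fun y => M * sinh (β * y)).integrableOn_Icc).mono_set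
      Ioc_subset_Icc_self
  rw [← Real.norm_eq_abs, sinhHead]
  refine (norm_integral_le_of_norm_le hbound ?_).trans_eq ?_
  · filter_upwards [ae_restrict_mem measurableSet_Ioc] with y hy
    have hsinh : 0 ≤ sinh (β * y) := sinh_nonneg_iff.2 (mul_nonneg hβ.le hy.1.le)
    rw [norm_mul, Real.norm_eq_abs, Real.norm_eq_abs, abs_of_nonneg hsinh, mul_comm M]
    exact mul_le_mul_of_nonneg_left (hM y hy.1.le) hsinh
  · rw [integral_const_mul, integral_sinh_mul_Ioc hβ hx, mul_div_assoc]

def G0Closed (β : ℝ) (h : ℝ → ℝ) (x : ℝ) : ℝ :=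
  2 / β * (sinh (β * x) * expTail β h x + exp (-(β * x)) * sinhHead β h x)

def G0ClosedDeriv (β : ℝ) (h : ℝ → ℝ) (x : ℝ) : ℝ :=
  2 * (cosh (β * x) * expTail β h x - exp (-(β * x)) * sinhHead β h x)

theorem exp_neg_mul_cosh_add_sinh (t : ℝ) : exp (-t) * (cosh t + sinh t) = 1 := by
  rw [cosh_add_sinh, ← exp_add, neg_add_cancel, exp_zero]

theorem hasDerivAt_exp_neg_mul (β x : ℝ) :
    HasDerivAt (fun x => exp (-(β * x))) (-β * exp (-(β * x))) x := by
  simpa [mul_comm] using ((hasDerivAt_id x).const_mul β).neg.exp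

theorem hasDerivAt_sinh_mul (β x : ℝ) :
    HasDerivAt (fun x => sinh (β * x)) (β * cosh (β * x)) x := by
  simpa [mul_comm] using ((hasDerivAt_id x).const_mul β).sinh

theorem hasDerivAt_cosh_mul (β x : ℝ) :
    HasDerivAt (fun x => cosh (β * x)) (β * sinh (β * x)) x := by
  simpa [mul_comm] using ((hasDerivAt_id x).const_mul β).cosh

theorem hasDerivAt_G0Closed (hβ : 0 < β) (hcont : ContinuousOn h (Ici 0))
    (hM : ∀ y ∈ Ici (0 : ℝ), |h y| ≤ M) {x : ℝ} (hx : 0 < x) :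
    HasDerivAt (G0Closed β h) (G0ClosedDeriv β h x) x := by
  have := (((hasDerivAt_sinh_mul β x).mul (hasDerivAt_expTail hβ hcont hM hx)).add
    ((hasDerivAt_exp_neg_mul β x).mul (hasDerivAt_sinhHead (β := β) hcont hx))).const_mul (2 / β)
  -- the two `h x` terms cancel, as in variation of constants
  refine this.congr_deriv ?_
  unfold G0ClosedDeriv
  field_simp
  ring

theorem hasDerivAt_G0ClosedDeriv (hβ : 0 < β) (hcont : ContinuousOn h (Ici 0))
    (hM : ∀ y ∈ Ici (0 : ℝ), |h y| ≤ M) {x : ℝ} (hx : 0 < x) :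
    HasDerivAt (G0ClosedDeriv β h) (β ^ 2 * G0Closed β h x - 2 * h x) x := by
  have := (((hasDerivAt_cosh_mul β x).mul (hasDerivAt_expTail hβ hcont hM hx)).sub
    ((hasDerivAt_exp_neg_mul β x).mul (hasDerivAt_sinhHead (β := β) hcont hx))).const_mul 2
  refine this.congr_deriv ?_
  unfold G0Closed
  field_simp
  linear_combination (-h x) * exp_neg_mul_cosh_add_sinh (β * x)

theorem tendsto_exp_neg_mul_nhdsGT_zero (β : ℝ) :
    Tendsto (fun x => exp (-(β * x))) (𝓝[>] 0) (𝓝 1) := by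
  simpa using ((by fun_prop : Continuous fun x => exp (-(β * x))).tendsto 0).mono_left
    nhdsWithin_le_nhds

theorem tendsto_G0Closed (hβ : 0 < β) (hcont : ContinuousOn h (Ici 0))
    (hM : ∀ y ∈ Ici (0 : ℝ), |h y| ≤ M) :
    Tendsto (G0Closed β h) (𝓝[>] 0) (𝓝 0) := by
  have hsinh : Tendsto (fun x => sinh (β * x)) (𝓝[>] 0) (𝓝 0) := by
    simpa using ((by fun_prop : Continuous fun x => sinh (β * x)).tendsto 0).mono_left
      nhdsWithin_le_nhds
  unfold G0Closed
  simpa using (((hsinh.mul (tendsto_expTail hβ hcont hM)).add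
    ((tendsto_exp_neg_mul_nhdsGT_zero β).mul (tendsto_sinhHead (β := β) hcont))).const_mul (2 / β))

theorem tendsto_G0ClosedDeriv (hβ : 0 < β) (hcont : ContinuousOn h (Ici 0))
    (hM : ∀ y ∈ Ici (0 : ℝ), |h y| ≤ M) :
    Tendsto (G0ClosedDeriv β h) (𝓝[>] 0) (𝓝 (2 * expTail β h 0)) := by
  have hcosh : Tendsto (fun x => cosh (β * x)) (𝓝[>] 0) (𝓝 1) := by
    simpa using ((by fun_prop : Continuous fun x => cosh (β * x)).tendsto 0).mono_left
      nhdsWithin_le_nhds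
  unfold G0ClosedDeriv
  simpa using (((hcosh.mul (tendsto_expTail hβ hcont hM)).sub
    ((tendsto_exp_neg_mul_nhdsGT_zero β).mul (tendsto_sinhHead (β := β) hcont))).const_mul 2)

theorem G0_eq_G0Closed {α : ℝ} (hβ : 0 < β) (hαβ : √(2 * α) = β)
    (hcont : ContinuousOn h (Ici 0)) (hM : ∀ y ∈ Ici (0 : ℝ), |h y| ≤ M) {x : ℝ} (hx : 0 < x) :
    G0 α h x = G0Closed β h x := by
  have hhead : EqOn (fun y => g0 α x y * h y)
      (fun y => 2 / β * exp (-(β * x)) * (sinh (β * y) * h y)) (Ioc 0 x) := by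
    intro y hy
    simp only [g0, min_eq_right hy.2, max_eq_left hy.2, hαβ]
    ring
  have htail : EqOn (fun y => g0 α x y * h y)
      (fun y => 2 / β * sinh (β * x) * (exp (-(β * y)) * h y)) (Ioi x) := by
    intro y hy
    simp only [g0, min_eq_left hy.out.le, max_eq_right hy.out.le, hαβ]
    ring
  rw [G0, ← Ioc_union_Ioi_eq_Ioi hx.le, setIntegral_union Ioc_disjoint_Ioi_same measurableSet_Ioi
    (IntegrableOn.congr_fun ((integrableOn_sinh_mul_mul_Ioc hcont x).const_mul _) hhead.symm
      measurableSet_Ioc)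
    (IntegrableOn.congr_fun ((integrableOn_exp_neg_mul_mul_Ioi hβ hcont hM hx.le).const_mul _)
      htail.symm measurableSet_Ioi),
    setIntegral_congr_fun measurableSet_Ioc hhead, setIntegral_congr_fun measurableSet_Ioi htail,
    integral_const_mul, integral_const_mul, G0Closed, expTail, sinhHead]
  ring

theorem abs_G0Closed_le (hβ : 0 < β) (hM : ∀ y ∈ Ici (0 : ℝ), |h y| ≤ M) {x : ℝ} (hx : 0 ≤ x) :
    |G0Closed β h x| ≤ 2 * M / β ^ 2 * (1 - exp (-(β * x))) := by
  have hsinh : 0 ≤ sinh (β * x) := sinh_nonneg_iff.2 (mul_nonneg hβ.le hx)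
  calc |G0Closed β h x|
      ≤ 2 / β * (sinh (β * x) * (M * exp (-(β * x)) / β) +
          exp (-(β * x)) * (M * (cosh (β * x) - 1) / β)) := by
        rw [G0Closed, abs_mul, abs_of_pos (by positivity : 0 < 2 / β)]
        gcongr
        refine (abs_add_le _ _).trans ?_
        rw [abs_mul, abs_mul, abs_of_nonneg hsinh, abs_of_pos (exp_pos _)]
        gcongr
        · exact abs_expTail_le hβ hM hx
        · exact abs_sinhHead_le hβ hM hx
    _ = 2 * M / β ^ 2 * (1 - exp (-(β * x))) := by
        field_simp
        linear_combination M * exp_neg_mul_cosh_add_sinh (β * x)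

theorem one_sub_exp_neg_mul_le {x : ℝ} (hx : 0 ≤ x) :
    1 - exp (-(β * x)) ≤ max 1 β * min 1 x := by
  have hle_one : 1 - exp (-(β * x)) ≤ 1 := by linarith [exp_pos (-(β * x))]
  have hle_mul : 1 - exp (-(β * x)) ≤ β * x := by linarith [add_one_le_exp (-(β * x))]
  rcases le_total x 1 with hx1 | hx1
  · rw [min_eq_right hx1]
    exact hle_mul.trans (mul_le_mul_of_nonneg_right (le_max_right _ _) hx)
  · rw [min_eq_left hx1, mul_one]
    exact hle_one.trans (le_max_left _ _)

theorem integrableOn_Ioi_of_abs_le_one_sub_exp {μ : Measure ℝ}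
    (hμ : ∫⁻ x in Ioi 0, ENNReal.ofReal (min 1 x) ∂μ < ⊤) {u : ℝ → ℝ} {C : ℝ}
    (hC : 0 ≤ C) (hu : ContinuousOn u (Ioi 0))
    (hle : ∀ x ∈ Ioi (0 : ℝ), |u x| ≤ C * (1 - exp (-(β * x)))) :
    IntegrableOn u (Ioi 0) μ := by
  have hmin : IntegrableOn (fun x => min 1 x) (Ioi 0) μ := by
    refine ⟨by fun_prop, ?_⟩
    rw [HasFiniteIntegral, setLIntegral_congr_fun measurableSet_Ioi
      fun x hx => Real.enorm_eq_ofReal (le_min zero_le_one hx.out.le)]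
    exact hμ
  refine (hmin.const_mul (C * max 1 β)).mono' (hu.aestronglyMeasurable measurableSet_Ioi) ?_
  filter_upwards [ae_restrict_mem measurableSet_Ioi] with x hx
  rw [Real.norm_eq_abs, mul_assoc]
  exact (hle x hx).trans (mul_le_mul_of_nonneg_left (one_sub_exp_neg_mul_le hx.out.le) hC)

theorem Set.EqOn.eqOn_deriv_of_hasDerivAt {f g g' : ℝ → ℝ} {s : Set ℝ} (hfg : EqOn f g s)
    (hs : IsOpen s) (hg : ∀ x ∈ s, HasDerivAt g (g' x) x) : EqOn (_root_.deriv f) g' s :=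
  fun x hx => (hfg.deriv hs hx).trans (hg x hx).deriv

theorem eq_of_tendsto_deriv_of_eqOn_G0Closed {f : ℝ → ℝ} {c L₁ L₂ : ℝ} (hβ : 0 < β)
    (hcont : ContinuousOn h (Ici 0)) (hM : ∀ y ∈ Ici (0 : ℝ), |h y| ≤ M)
    (hf : EqOn f (fun x => G0Closed β h x + c * exp (-(β * x))) (Ioi 0))
    (hL₁ : Tendsto (deriv f) (𝓝[>] 0) (𝓝 L₁))
    (hL₂ : Tendsto (deriv (deriv f)) (𝓝[>] 0) (𝓝 L₂)) :
    L₁ = 2 * expTail β h 0 - c * β ∧ L₂ = β ^ 2 * c - 2 * h 0 := by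
  have hf' : EqOn (deriv f) (fun x => G0ClosedDeriv β h x - c * β * exp (-(β * x))) (Ioi 0) :=
    hf.eqOn_deriv_of_hasDerivAt isOpen_Ioi fun x hx =>
      ((hasDerivAt_G0Closed hβ hcont hM hx).add
        ((hasDerivAt_exp_neg_mul β x).const_mul c)).congr_deriv (by ring)
  have hf'' : EqOn (deriv (deriv f))
      (fun x => β ^ 2 * (G0Closed β h x + c * exp (-(β * x))) - 2 * h x) (Ioi 0) :=
    hf'.eqOn_deriv_of_hasDerivAt isOpen_Ioi fun x hx =>
      ((hasDerivAt_G0ClosedDeriv hβ hcont hM hx).sub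
        ((hasDerivAt_exp_neg_mul β x).const_mul (c * β))).congr_deriv (by ring)
  have hh0 : Tendsto h (𝓝[>] 0) (𝓝 (h 0)) :=
    (hcont 0 self_mem_Ici).mono_left (nhdsWithin_mono _ Ioi_subset_Ici_self)
  have hexp := tendsto_exp_neg_mul_nhdsGT_zero β
  constructor
  · refine tendsto_nhds_unique hL₁ (Tendsto.congr' (eventuallyEq_nhdsWithin_of_eqOn hf').symm ?_)
    simpa using (tendsto_G0ClosedDeriv hβ hcont hM).sub (hexp.const_mul (c * β))
  · refine tendsto_nhds_unique hL₂ (Tendsto.congr' (eventuallyEq_nhdsWithin_of_eqOn hf'').symm ?_)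
    simpa using (((tendsto_G0Closed hβ hcont hM).add (hexp.const_mul c)).const_mul (β ^ 2)).sub
      (hh0.const_mul 2)

theorem integrableOn_G0 {α : ℝ} {μ : Measure ℝ}
    (hμ : ∫⁻ x in Ioi 0, ENNReal.ofReal (min 1 x) ∂μ < ⊤) (hβ : 0 < β) (hαβ : √(2 * α) = β)
    (hcont : ContinuousOn h (Ici 0)) (hM : ∀ y ∈ Ici (0 : ℝ), |h y| ≤ M) :
    IntegrableOn (G0 α h) (Ioi 0) μ := by
  have hG : EqOn (G0 α h) (G0Closed β h) (Ioi 0) := fun x hx =>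
    G0_eq_G0Closed hβ hαβ hcont hM hx
  have hM₀ : 0 ≤ M := (abs_nonneg _).trans (hM 0 self_mem_Ici)
  refine integrableOn_Ioi_of_abs_le_one_sub_exp (β := β) (C := 2 * M / β ^ 2) hμ
    (by positivity) ?_ fun x hx => ?_
  · exact ContinuousOn.congr (fun x hx => (hasDerivAt_G0Closed hβ hcont hM hx).continuousAt
      |>.continuousWithinAt) hG
  · rw [hG hx]
    exact abs_G0Closed_le hβ hM hx.out.le

theorem integrableOn_one_sub_exp_neg_mul {μ : Measure ℝ}
    (hμ : ∫⁻ x in Ioi 0, ENNReal.ofReal (min 1 x) ∂μ < ⊤) (hβ : 0 ≤ β) :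
    IntegrableOn (fun x => 1 - exp (-(β * x))) (Ioi 0) μ := by
  refine integrableOn_Ioi_of_abs_le_one_sub_exp (β := β) hμ zero_le_one (by fun_prop)
    fun x hx => ?_
  rw [one_mul, abs_of_nonneg (sub_nonneg.2 (exp_le_one_iff.2 ?_))]
  exact neg_nonpos.2 (mul_nonneg hβ hx.out.le)

end

/-- For an admissible quadruple, `α > 0`, `h ∈ C₀([0,∞))`, `c ∈ ℝ` and
`f(0) = c`, `f(x) = G⁰_α h(x) + c·e^{−√(2α)x}` for `x > 0`: the function
`x ↦ f(0) − f(x)` is `p₄`-integrable on `(0,∞)`, and the boundary identity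
`p₁·f(0) − p₂·f'(0⁺) + (p₃/2)·f''(0⁺) + ∫ (f(0)−f(x)) p₄(dx) = 0` holds iff
`c·(p₁ + √(2α)p₂ + αp₃ + ∫(1−e^{−√(2α)x})p₄(dx))
  = 2p₂·∫ e^{−√(2α)x}h(x)dx + p₃·h(0) + ∫ G⁰_α h dp₄`. -/
theorem stmt5 (p₁ p₂ p₃ : ℝ) (p₄ : Measure ℝ) (hp : IsAdmissible p₁ p₂ p₃ p₄)
    (α : ℝ) (hα : 0 < α) (h : ℝ → ℝ) (hh : MemC0 h) (c : ℝ)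
    (f : ℝ → ℝ) (hf0 : f 0 = c)
    (hf : ∀ x, 0 < x → f x = G0 α h x + c * Real.exp (-(Real.sqrt (2 * α) * x)))
    (L₁ L₂ : ℝ)
    (hL₁ : Filter.Tendsto (deriv f) (nhdsWithin 0 (Set.Ioi 0)) (nhds L₁))
    (hL₂ : Filter.Tendsto (deriv (deriv f)) (nhdsWithin 0 (Set.Ioi 0)) (nhds L₂)) :
    IntegrableOn (fun x => f 0 - f x) (Set.Ioi 0) p₄ ∧
    (p₁ * f 0 - p₂ * L₁ + p₃ / 2 * L₂ +
        (∫ x in Set.Ioi (0 : ℝ), (f 0 - f x) ∂p₄) = 0 ↔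
      c * (p₁ + Real.sqrt (2 * α) * p₂ + α * p₃ +
            ∫ x in Set.Ioi (0 : ℝ), (1 - Real.exp (-(Real.sqrt (2 * α) * x))) ∂p₄) =
        2 * p₂ * (∫ x in Set.Ioi (0 : ℝ), Real.exp (-(Real.sqrt (2 * α) * x)) * h x) +
          p₃ * h 0 + ∫ x in Set.Ioi (0 : ℝ), G0 α h x ∂p₄) := by
  obtain ⟨-, -, -, -, hp₄, -⟩ := hp
  obtain ⟨M, hM⟩ := hh.exists_abs_le
  generalize hαβ : √(2 * α) = β at hf ⊢
  have hβ : 0 < β := hαβ ▸ sqrt_pos.2 (by linarith)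
  have hβα : β ^ 2 = 2 * α := hαβ ▸ sq_sqrt (by linarith)
  obtain ⟨rfl, rfl⟩ := eq_of_tendsto_deriv_of_eqOn_G0Closed hβ hh.1 hM
    (fun x hx => by rw [hf x hx, G0_eq_G0Closed hβ hαβ hh.1 hM hx]) hL₁ hL₂
  have hGint := integrableOn_G0 hp₄ hβ hαβ hh.1 hM
  have hexpint := (integrableOn_one_sub_exp_neg_mul hp₄ hβ.le).const_mul c
  have hdiff : EqOn (fun x => f 0 - f x) (fun x => c * (1 - exp (-(β * x))) - G0 α h x)
      (Ioi 0) := fun x hx => by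
    simp only [hf0, hf x hx]
    ring
  refine ⟨IntegrableOn.congr_fun (hexpint.sub hGint) hdiff.symm measurableSet_Ioi, ?_⟩
  rw [setIntegral_congr_fun measurableSet_Ioi hdiff, integral_sub hexpint hGint,
    integral_const_mul, hf0, ← expTail]
  constructor <;> intro H
  · linear_combination H - c * p₃ / 2 * hβα
  · linear_combination H + c * p₃ / 2 * hβα
end
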